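/- arXiv:2306.06845 — 2 statements merged into one kernel-verified Lean document; each statement's English description precedes it below -/
import Mathlib

section
/- For every integer m ≥ 2 and all positive reals a, b, the SDP divergence D_SDP^(m)(a,b) := max_{t≥0} (1/2^{m-1})·[a(1 − e^{−(m−1)t}) + b·Σ_{r=1}^{m−1} C(m−1,r)(1 − e^{−(m−1−2r)t})] is at most the Hellinger divergence D_GH^(m)(a,b) := (1/2^{m-1})(√a − √b)². -/
/-!
Write `n = m - 1`. In the sum, the terms with `0 < r < n` pair off under `r ↦ n - r`, which
flips the sign of the exponent, so together they contribute
`∑ C(n,r) (1 - cosh ((2r - n) t)) ≤ 0`.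
What remains, `a (1 - e^{-nt}) + b (1 - e^{nt})`, is at most `a + b - 2√(ab) = (√a - √b)²`
by AM-GM applied to `a e^{-nt}` and `b e^{nt}`.
-/

open Real Finset

lemma two_le_exp_add_exp_neg (x : ℝ) : 2 ≤ exp x + exp (-x) := by
  have := one_le_cosh x
  rw [cosh_eq] at this
  linarith

lemma mul_one_sub_exp_neg_add_mul_one_sub_exp_le (a b x : ℝ) (ha : 0 ≤ a) (hb : 0 ≤ b) :
    a * (1 - exp (-x)) + b * (1 - exp x) ≤ (√a - √b) ^ 2 := by
  have hneg : exp (-(x / 2)) ^ 2 = exp (-x) := by rw [← exp_nat_mul]; ring_nf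
  have hpos : exp (x / 2) ^ 2 = exp x := by rw [← exp_nat_mul]; ring_nf
  have hprod : exp (-(x / 2)) * exp (x / 2) = 1 := by rw [← exp_add]; simp
  have cross : √a * exp (-(x / 2)) * (√b * exp (x / 2)) = √a * √b := by
    linear_combination √a * √b * hprod
  have amgm := two_mul_le_add_sq (√a * exp (-(x / 2))) (√b * exp (x / 2))
  rw [mul_assoc 2, cross, mul_pow, mul_pow, sq_sqrt ha, sq_sqrt hb, hneg, hpos] at amgm
  rw [sub_sq, sq_sqrt ha, sq_sqrt hb]
  linarith

lemma sum_Ioo_choose_mul_one_sub_exp_nonpos (n : ℕ) (t : ℝ) :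
    ∑ r ∈ Ioo 0 n, (n.choose r : ℝ) * (1 - exp (-((n : ℝ) - 2 * r) * t)) ≤ 0 := by
  set x : ℕ → ℝ := fun r => -((n : ℝ) - 2 * r) * t
  have reflect : ∑ r ∈ Ioo 0 n, (n.choose r : ℝ) * (1 - exp (x r)) =
      ∑ r ∈ Ioo 0 n, (n.choose r : ℝ) * (1 - exp (-x r)) := by
    refine sum_nbij' (fun r => n - r) (fun r => n - r) ?_ ?_ ?_ ?_ ?_ <;>
      intro r hr <;> simp only [mem_Ioo] at hr ⊢
    · omega
    · omega
    · omega
    · omega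
    · simp only [x, Nat.choose_symm hr.2.le, Nat.cast_sub hr.2.le]
      ring_nf
  have paired :
      ∑ r ∈ Ioo 0 n, (n.choose r : ℝ) * ((1 - exp (x r)) + (1 - exp (-x r))) ≤ 0 :=
    sum_nonpos fun r _ => mul_nonpos_of_nonneg_of_nonpos (by positivity)
      (by linarith [two_le_exp_add_exp_neg (x r)])
  simp only [mul_add, sum_add_distrib, ← reflect] at paired
  linarith

lemma mul_one_sub_exp_add_mul_sum_choose_le (n : ℕ) (hn : 0 < n) (a b t : ℝ)
    (ha : 0 ≤ a) (hb : 0 ≤ b) :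
    a * (1 - exp (-(n : ℝ) * t)) +
        b * ∑ r ∈ Icc 1 n, (n.choose r : ℝ) * (1 - exp (-((n : ℝ) - 2 * r) * t)) ≤
      (√a - √b) ^ 2 := by
  rw [show Icc 1 n = Ioc 0 n from Icc_add_one_left_eq_Ioc 0 n, ← Ioo_insert_right hn,
    sum_insert (by simp), Nat.choose_self, show -((n : ℝ) - 2 * n) * t = n * t by ring, neg_mul]
  have inner := mul_nonpos_of_nonneg_of_nonpos hb (sum_Ioo_choose_mul_one_sub_exp_nonpos n t)
  have outer := mul_one_sub_exp_neg_add_mul_one_sub_exp_le a b (n * t) ha hb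
  push_cast at outer ⊢
  linarith

theorem stmt1 (m : ℕ) (hm : 2 ≤ m) (a b : ℝ) (ha : 0 < a) (hb : 0 < b) :
    sSup {y : ℝ | ∃ t : ℝ, 0 ≤ t ∧
        y = (1 / 2 ^ (m - 1)) *
          (a * (1 - Real.exp (-((m : ℝ) - 1) * t)) +
            b * ∑ r ∈ Finset.Icc 1 (m - 1),
              (Nat.choose (m - 1) r : ℝ) * (1 - Real.exp (-(((m : ℝ) - 1) - 2 * r) * t)))}
      ≤ (1 / 2 ^ (m - 1)) * (Real.sqrt a - Real.sqrt b) ^ 2 := by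
  have cast_pred : ((m - 1 : ℕ) : ℝ) = (m : ℝ) - 1 := by
    rw [Nat.cast_sub (by omega), Nat.cast_one]
  refine Real.sSup_le ?_ (by positivity)
  rintro y ⟨t, -, rfl⟩
  gcongr
  rw [← cast_pred]
  exact mul_one_sub_exp_add_mul_sum_choose_le (m - 1) (by omega) a b t ha.le hb.le
end

section
/- Let X be a Bernoulli random variable with parameter p ∈ [0,1], and let w, t ∈ ℝ with t ≥ 0 and |tw| ≤ r. Then E[exp(t·w·(X − p))] ≤ exp((e^r/2)·t²·w²·p). -/
open MeasureTheory

lemma exp_quad_bound (s r : ℝ) (hs : |s| ≤ r) :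
    Real.exp s ≤ 1 + s + Real.exp r / 2 * s ^ 2 := by
  have hr : 0 ≤ r := le_trans (abs_nonneg s) hs
  set f : ℝ → ℝ := fun x => 1 + x + Real.exp r / 2 * x ^ 2 - Real.exp x with hf
  have hderiv : ∀ x : ℝ, HasDerivAt f (1 + Real.exp r * x - Real.exp x) x := by
    intro x
    have h1 : HasDerivAt (fun x : ℝ => 1 + x) 1 x := (hasDerivAt_id x).const_add 1
    have h2 : HasDerivAt (fun x : ℝ => Real.exp r / 2 * x ^ 2)
        (Real.exp r / 2 * (2 * x ^ 1)) x := (hasDerivAt_pow 2 x).const_mul _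
    have h3 : HasDerivAt f (1 + Real.exp r / 2 * (2 * x ^ 1) - Real.exp x) x := (h1.add h2).sub (Real.hasDerivAt_exp x)
    convert h3 using 1
    ring
  have hcont : ContinuousOn f (Set.univ) := by
    apply Continuous.continuousOn
    fun_prop
  have hf0 : f 0 = 0 := by simp [hf]
  have hsuff : 0 ≤ f s := by
    rcases le_or_gt 0 s with hs0 | hs0
    · have hmono : MonotoneOn f (Set.Icc 0 r) := by
        apply monotoneOn_of_deriv_nonneg (convex_Icc 0 r) (hcont.mono (Set.subset_univ _))
        · intro x hx
          exact (hderiv x).differentiableAt.differentiableWithinAt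
        · intro x hx
          rw [interior_Icc] at hx
          rw [(hderiv x).deriv]
          have hx0 : 0 < x := hx.1
          have hxr : x < r := hx.2
          have hA : Real.exp (-x) * Real.exp x = 1 := by
            rw [← Real.exp_add]; simp
          have hB := Real.add_one_le_exp (-x)
          have hC : Real.exp x ≤ Real.exp r := Real.exp_le_exp.2 hxr.le
          nlinarith [Real.exp_pos x, mul_le_mul_of_nonneg_right hB (Real.exp_pos x).le,
            mul_le_mul_of_nonneg_left hC hx0.le]
      have hsr : s ≤ r := le_trans (le_abs_self s) hs
      have := hmono (Set.mem_Icc.2 ⟨le_refl 0, hr⟩) (Set.mem_Icc.2 ⟨hs0, hsr⟩) hs0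
      linarith [hf0 ▸ this]
    · have hanti : AntitoneOn f (Set.Icc (-r) 0) := by
        apply antitoneOn_of_deriv_nonpos (convex_Icc (-r) 0) (hcont.mono (Set.subset_univ _))
        · intro x hx
          exact (hderiv x).differentiableAt.differentiableWithinAt
        · intro x hx
          rw [interior_Icc] at hx
          rw [(hderiv x).deriv]
          have hx0 : x < 0 := hx.2
          have hB := Real.add_one_le_exp x
          have hC : (1 : ℝ) ≤ Real.exp r := Real.one_le_exp hr
          nlinarith
      have hsr : -r ≤ s := neg_le_of_abs_le hs
      have := hanti (Set.mem_Icc.2 ⟨hsr, hs0.le⟩) (Set.mem_Icc.2 ⟨neg_nonpos_of_nonneg hr, le_refl 0⟩) hs0.le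
      linarith [hf0 ▸ this]
  simp only [hf] at hsuff
  linarith

theorem stmt12 {Ω : Type*} [MeasurableSpace Ω] (μ : Measure Ω) [IsProbabilityMeasure μ]
    (X : Ω → ℝ) (hX : Measurable X) (p : ℝ) (hp0 : 0 ≤ p) (hp1 : p ≤ 1)
    (hber : ∀ ω, X ω = 0 ∨ X ω = 1) (hpX : μ {ω | X ω = 1} = ENNReal.ofReal p)
    (w t r : ℝ) (ht : 0 ≤ t) (htw : |t * w| ≤ r) :
    ∫ ω, Real.exp (t * w * (X ω - p)) ∂μ ≤
      Real.exp (Real.exp r / 2 * t ^ 2 * w ^ 2 * p) := by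
  set s : ℝ := t * w with hs_def
  set a : ℝ := Real.exp (s * (1 - p)) with ha_def
  set b : ℝ := Real.exp (-(s * p)) with hb_def
  have hA : MeasurableSet {ω | X ω = 1} := hX (measurableSet_singleton 1)
  have hμA : (μ {ω | X ω = 1}).toReal = p := by
    rw [hpX, ENNReal.toReal_ofReal hp0]
  have hfun : (fun ω => Real.exp (t * w * (X ω - p))) =
      fun ω => Set.indicator {ω | X ω = 1} (fun _ => a - b) ω + b := by
    funext ω
    rcases hber ω with h | h
    · have hω : ω ∉ {ω | X ω = 1} := by simp [Set.mem_setOf_eq, h]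
      rw [Set.indicator_of_notMem hω, zero_add, hb_def]
      rw [h]
      congr 1
      ring
    · have hω : ω ∈ {ω | X ω = 1} := by simp [Set.mem_setOf_eq, h]
      rw [Set.indicator_of_mem hω, sub_add_cancel, ha_def, h]
  rw [hfun]
  have hint1 : Integrable (fun ω => Set.indicator {ω | X ω = 1} (fun _ => a - b) ω) μ :=
    (integrable_const (a - b)).indicator hA
  rw [integral_add hint1 (integrable_const b), integral_indicator_const _ hA, integral_const,
    measureReal_def, measureReal_def, measure_univ, hμA]
  simp only [smul_eq_mul, ENNReal.toReal_one, one_smul]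
  -- now the pure real inequality
  have key : Real.exp s ≤ 1 + s + Real.exp r / 2 * s ^ 2 := exp_quad_bound s r htw
  have heq : p * (a - b) + 1 * b = b * (1 + p * (Real.exp s - 1)) := by
    have : a = Real.exp s * b := by
      rw [ha_def, hb_def, ← Real.exp_add]; congr 1; ring
    rw [this]; ring
  rw [heq]
  calc b * (1 + p * (Real.exp s - 1))
      ≤ b * Real.exp (p * (Real.exp s - 1)) := by
        apply mul_le_mul_of_nonneg_left _ (Real.exp_pos _).le
        linarith [Real.add_one_le_exp (p * (Real.exp s - 1))]
    _ = Real.exp (p * (Real.exp s - 1) + -(s * p)) := by rw [hb_def, ← Real.exp_add]; ring_nf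
    _ ≤ Real.exp (Real.exp r / 2 * t ^ 2 * w ^ 2 * p) := by
        apply Real.exp_le_exp.2
        have h3 : Real.exp r / 2 * t ^ 2 * w ^ 2 * p = Real.exp r / 2 * s ^ 2 * p := by
          rw [hs_def]; ring
        rw [h3]
        nlinarith [mul_le_mul_of_nonneg_left key hp0]
end
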